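/- arXiv:0811.4309 — 2 statements merged into one kernel-verified Lean document; each statement's English description precedes it below -/
import Mathlib

section
/- Let A = A_q^a be a quantum complete intersection over a field k, let φ : A → k be the k-linear functional sending an element of A to the coefficient of the monomial x_c^{a_c−1}⋯x_1^{a_1−1} with respect to the k-basis {x_c^{i_c}⋯x_1^{i_1} : 0 ≤ i_w ≤ a_w − 1}, and let ν be the k-algebra automorphism of A with ν(x_w) = (∏_{i=1}^{c} q_{iw}^{a_i − 1}) x_w for 1 ≤ w ≤ c. Then φ(λx) = φ(ν(x)λ) for all λ, x ∈ A; that is, ν is a Nakayama automorphism of A with respect to φ. -/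
/-!
Both sides of `φ (l * x) = φ (ν x * l)` are linear in `l`, and the `x` satisfying it for every
`l` form a subalgebra; so it suffices to take `x = x_w` and `l` a monomial `x^e`. Commuting `x_w`
past `x^e` costs the scalar `∏_v q_{wv}^{e_v}`, and `x_w x^e` is a multiple of `x^{e + δ_w}`.
Hence both sides vanish unless `e + δ_w` is the socle exponent `(a_v - 1)_v`, and there the
scalars cancel because `q_{vw} q_{wv} = 1`.
-/

noncomputable section

/-- The defining relations of the quantum complete intersection `A_q^a`:
`X_i ^ (a i) = 0` and `X_i * X_j = q i j • (X_j * X_i)`. -/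
def qciRel (k : Type) [Field k] (c : ℕ) (q : Fin c → Fin c → k) (a : Fin c → ℕ) :
    FreeAlgebra k (Fin c) → FreeAlgebra k (Fin c) → Prop := fun x y =>
  (∃ i, x = FreeAlgebra.ι k i ^ a i ∧ y = 0) ∨
  (∃ i j, x = FreeAlgebra.ι k i * FreeAlgebra.ι k j ∧
    y = q i j • (FreeAlgebra.ι k j * FreeAlgebra.ι k i))

/-- The quantum complete intersection `A_q^a = k⟨X_1,…,X_c⟩/(X_i^{a_i}, X_iX_j - q_{ij}X_jX_i)`. -/
abbrev QCI (k : Type) [Field k] (c : ℕ) (q : Fin c → Fin c → k) (a : Fin c → ℕ) : Type :=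
  RingQuot (qciRel k c q a)

/-- The generator `x_i` of `A_q^a` (the image of `X_i`). -/
def qciX (k : Type) [Field k] {c : ℕ} (q : Fin c → Fin c → k) (a : Fin c → ℕ) (i : Fin c) :
    QCI k c q a :=
  RingQuot.mkAlgHom k (qciRel k c q a) (FreeAlgebra.ι k i)

/-- The descending monomial `x_c^{d_c} ⋯ x_1^{d_1}` in `A_q^a`. -/
def qciDMono (k : Type) [Field k] {c : ℕ} (q : Fin c → Fin c → k) (a : Fin c → ℕ)
    (d : (i : Fin c) → Fin (a i)) : QCI k c q a :=
  (List.ofFn fun w : Fin c => qciX k q a w.rev ^ (d w.rev : ℕ)).prod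

section Algebra

variable {k A : Type*} [CommSemiring k] [Semiring A] [Algebra k A]

def skewCommutant (x : A) : Submonoid (k × A) where
  carrier := {p | x * p.2 = p.1 • (p.2 * x)}
  one_mem' := by simp
  mul_mem' {p p'} hp hp' := by
    change x * (p.2 * p'.2) = (p.1 * p'.1) • (p.2 * p'.2 * x)
    rw [← mul_assoc, hp, smul_mul_assoc, mul_assoc, hp', mul_smul_comm, smul_smul, mul_assoc]

theorem mem_skewCommutant {x : A} {p : k × A} :
    p ∈ skewCommutant x ↔ x * p.2 = p.1 • (p.2 * x) :=
  Iff.rfl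

theorem mul_list_prod_eq_smul {ι : Type*} {x : A} (l : List ι) (f : ι → k × A)
    (hf : ∀ i ∈ l, f i ∈ skewCommutant x) :
    x * (l.map fun i => (f i).2).prod
      = (l.map fun i => (f i).1).prod • ((l.map fun i => (f i).2).prod * x) := by
  have h := list_prod_mem (S := skewCommutant x) (l := l.map f) (by simpa using hf)
  have hfst := map_list_prod (MonoidHom.fst k A) (l.map f)
  have hsnd := map_list_prod (MonoidHom.snd k A) (l.map f)
  simp only [MonoidHom.coe_fst, MonoidHom.coe_snd, List.map_map] at hfst hsnd
  rwa [mem_skewCommutant, hfst, hsnd] at h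

def nakayamaSubalgebra (φ : A →ₗ[k] k) (ν : A →ₐ[k] A) : Subalgebra k A where
  carrier := {x | ∀ l, φ (l * x) = φ (ν x * l)}
  mul_mem' {x y} hx hy l := by
    rw [← mul_assoc, hy, ← mul_assoc, hx, ← mul_assoc, ← map_mul]
  add_mem' {x y} hx hy l := by
    rw [mul_add, map_add, map_add, add_mul, map_add, hx, hy]
  algebraMap_mem' r l := by
    rw [AlgHom.commutes, Algebra.commutes]

theorem mem_nakayamaSubalgebra_of_basis {ι : Type*} (b : Module.Basis ι k A) {φ : A →ₗ[k] k}
    {ν : A →ₐ[k] A} {x : A} (hx : ∀ i, φ (b i * x) = φ (ν x * b i)) :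
    x ∈ nakayamaSubalgebra φ ν := by
  have h : φ ∘ₗ LinearMap.mulRight k x = φ ∘ₗ LinearMap.mulLeft k (ν x) := b.ext hx
  exact fun l => LinearMap.congr_fun h l

end Algebra

theorem prod_pow_mul_prod_pow_eq_one {ι M : Type*} [Fintype ι] [CommMonoid M]
    {q : ι → ι → M} {w : ι} (hqd : q w w = 1) (hqc : ∀ v, q v w * q w v = 1)
    {m e : ι → ℕ} (he : ∀ v ≠ w, e v = m v) :
    (∏ v, q v w ^ m v) * ∏ v, q w v ^ e v = 1 := by
  rw [← Finset.prod_mul_distrib]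
  refine Finset.prod_eq_one fun v _ => ?_
  by_cases hv : v = w
  · rw [hv, hqd, one_pow, one_pow, one_mul]
  · rw [he v hv, ← mul_pow, hqc, one_pow]

section QCI

variable {k : Type} [Field k] {c : ℕ} {q : Fin c → Fin c → k} {a : Fin c → ℕ}

theorem qciX_pow_eq_zero (i : Fin c) : qciX k q a i ^ a i = 0 := by
  simpa [qciX] using RingQuot.mkAlgHom_rel k (s := qciRel k c q a) (x := FreeAlgebra.ι k i ^ a i)
    (y := 0) (Or.inl ⟨i, rfl, rfl⟩)

theorem qciX_mul_qciX (i j : Fin c) :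
    qciX k q a i * qciX k q a j = q i j • (qciX k q a j * qciX k q a i) := by
  simpa [qciX] using RingQuot.mkAlgHom_rel k (s := qciRel k c q a)
    (x := FreeAlgebra.ι k i * FreeAlgebra.ι k j)
    (y := q i j • (FreeAlgebra.ι k j * FreeAlgebra.ι k i)) (Or.inr ⟨i, j, rfl, rfl⟩)

theorem adjoin_range_qciX : Algebra.adjoin k (Set.range (qciX k q a)) = ⊤ := by
  have hrange : Set.range (qciX k q a)
      = RingQuot.mkAlgHom k (qciRel k c q a) '' Set.range (FreeAlgebra.ι k) := by
    rw [← Set.range_comp]; rfl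
  rw [hrange, ← AlgHom.map_adjoin, FreeAlgebra.adjoin_range_ι, Algebra.map_top,
    AlgHom.range_eq_top]
  exact RingQuot.mkAlgHom_surjective k _

variable (k q a) in
def qciMono (e : Fin c → ℕ) : QCI k c q a :=
  ((List.finRange c).reverse.map fun v => qciX k q a v ^ e v).prod

theorem qciDMono_eq_qciMono (d : (i : Fin c) → Fin (a i)) :
    qciDMono k q a d = qciMono k q a fun i => d i := by
  rw [qciDMono, qciMono, List.ofFn_eq_map, List.finRange_reverse, List.map_map]
  rfl

theorem qciMono_eq_zero {e : Fin c → ℕ} {v : Fin c} (hv : a v ≤ e v) :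
    qciMono k q a e = 0 := by
  refine List.prod_eq_zero (List.mem_map.2 ⟨v, by simp, ?_⟩)
  rw [← Nat.add_sub_cancel' hv, pow_add, qciX_pow_eq_zero, zero_mul]

theorem qciX_mul_listProd (w : Fin c) (l : List (Fin c)) (e : Fin c → ℕ) :
    qciX k q a w * (l.map fun v => qciX k q a v ^ e v).prod
      = (l.map fun v => q w v ^ e v).prod •
          ((l.map fun v => qciX k q a v ^ e v).prod * qciX k q a w) :=
  mul_list_prod_eq_smul l (fun v => (q w v, qciX k q a v) ^ e v) fun v _ =>
    pow_mem (mem_skewCommutant.2 (qciX_mul_qciX w v)) _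

theorem qciX_mul_qciMono (w : Fin c) (e : Fin c → ℕ) :
    qciX k q a w * qciMono k q a e = (∏ v, q w v ^ e v) • (qciMono k q a e * qciX k q a w) := by
  rw [qciMono, qciX_mul_listProd, List.map_reverse, List.prod_reverse, ← Fin.prod_univ_def]

theorem exists_qciX_mul_qciMono (w : Fin c) (e : Fin c → ℕ) :
    ∃ s : k, qciX k q a w * qciMono k q a e
      = s • qciMono k q a (Function.update e w (e w + 1)) := by
  obtain ⟨H, L, hsplit⟩ := List.mem_iff_append.1 (List.mem_reverse.2 (List.mem_finRange w))
  have hw : w ∉ H ++ L := (List.nodup_cons.1 <| List.nodup_middle.1 <|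
    hsplit ▸ List.nodup_reverse.2 (List.nodup_finRange c)).1
  have hupd : ∀ l : List (Fin c), l ⊆ H ++ L →
      (l.map fun v => qciX k q a v ^ Function.update e w (e w + 1) v)
        = l.map fun v => qciX k q a v ^ e v := fun l hl =>
    List.map_congr_left fun v hv => by
      rw [Function.update_of_ne (by rintro rfl; exact hw (hl hv))]
  refine ⟨(H.map fun v => q w v ^ e v).prod, ?_⟩
  simp only [qciMono, hsplit, List.map_append, List.map_cons, List.prod_append, List.prod_cons,
    hupd H (List.subset_append_left H L), hupd L (List.subset_append_right H L),
    Function.update_self]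
  rw [← mul_assoc, qciX_mul_listProd, smul_mul_assoc, mul_assoc, ← mul_assoc (qciX k q a w),
    ← pow_succ']

theorem coord_qciMono_eq_zero {b : Module.Basis ((i : Fin c) → Fin (a i)) k (QCI k c q a)}
    (hb : ∀ d, b d = qciDMono k q a d) {d₀ : (i : Fin c) → Fin (a i)} {e : Fin c → ℕ}
    (he : e ≠ fun i => (d₀ i : ℕ)) : b.coord d₀ (qciMono k q a e) = 0 := by
  by_cases hlt : ∀ i, e i < a i
  · have hne : (fun i => (⟨e i, hlt i⟩ : Fin (a i))) ≠ d₀ := by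
      rintro rfl; exact he rfl
    rw [show qciMono k q a e = b fun i => ⟨e i, hlt i⟩ by rw [hb, qciDMono_eq_qciMono],
      Module.Basis.coord_apply, Module.Basis.repr_self, Finsupp.single_eq_of_ne' hne]
  · push Not at hlt
    obtain ⟨v, hv⟩ := hlt
    rw [qciMono_eq_zero hv, map_zero]

theorem coord_qciMono_mul_qciX (hqd : ∀ i, q i i = 1) (hqc : ∀ i j, q i j * q j i = 1)
    {b : Module.Basis ((i : Fin c) → Fin (a i)) k (QCI k c q a)}
    (hb : ∀ d, b d = qciDMono k q a d) {soc : (i : Fin c) → Fin (a i)}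
    (hsoc : ∀ i, (soc i : ℕ) = a i - 1) (w : Fin c) (e : Fin c → ℕ) :
    b.coord soc (qciMono k q a e * qciX k q a w)
      = (∏ v, q v w ^ (a v - 1)) * b.coord soc (qciX k q a w * qciMono k q a e) := by
  have hswap := congrArg (b.coord soc) (qciX_mul_qciMono (q := q) (a := a) w e)
  rw [map_smul, smul_eq_mul] at hswap
  rw [hswap, ← mul_assoc]
  by_cases hsocle : Function.update e w (e w + 1) = fun i => (soc i : ℕ)
  · have he : ∀ v ≠ w, e v = a v - 1 := fun v hv => by
      simpa [hv, hsoc] using congrFun hsocle v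
    rw [prod_pow_mul_prod_pow_eq_one (hqd w) (fun v => hqc v w) he, one_mul]
  · obtain ⟨s, hs⟩ := exists_qciX_mul_qciMono (q := q) w e
    have hχ : ∏ v, q w v ^ e v ≠ 0 :=
      Finset.prod_ne_zero_iff.2 fun v _ => pow_ne_zero _ (left_ne_zero_of_mul_eq_one (hqc w v))
    have hzero : b.coord soc (qciMono k q a e * qciX k q a w) = 0 := by
      refine (mul_eq_zero.1 ?_).resolve_left hχ
      rw [← hswap, hs, map_smul, coord_qciMono_eq_zero hb hsocle, smul_zero]
    rw [hzero, mul_zero]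

end QCI

theorem qci_nakayama
    (k : Type) [Field k] (c : ℕ)
    (q : Fin c → Fin c → k) (a : Fin c → ℕ)
    (hqd : ∀ i, q i i = 1) (hqc : ∀ i j, q i j * q j i = 1) (ha : ∀ i, 2 ≤ a i)
    -- the descending monomials form a k-basis of A
    (b : Module.Basis ((i : Fin c) → Fin (a i)) k (QCI k c q a))
    (hb : ∀ d, b d = qciDMono k q a d)
    -- φ is the coefficient of the socle monomial x_c^{a_c-1} ⋯ x_1^{a_1-1}
    (φ : QCI k c q a →ₗ[k] k)
    (hφ : φ = b.coord fun i => ⟨a i - 1, by have := ha i; omega⟩)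
    -- ν is the algebra automorphism with ν(x_w) = (∏_i q_{iw}^{a_i-1}) x_w
    (ν : QCI k c q a ≃ₐ[k] QCI k c q a)
    (hν : ∀ w : Fin c, ν (qciX k q a w) = (∏ i : Fin c, q i w ^ (a i - 1)) • qciX k q a w) :
    ∀ l x : QCI k c q a, φ (l * x) = φ (ν x * l) := by
  have htop : nakayamaSubalgebra φ ν.toAlgHom = ⊤ := by
    refine top_le_iff.1 (adjoin_range_qciX (q := q) (a := a) ▸ Algebra.adjoin_le ?_)
    rintro _ ⟨w, rfl⟩
    refine mem_nakayamaSubalgebra_of_basis b fun d => ?_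
    rw [AlgEquiv.coe_toAlgHom, hν, smul_mul_assoc, map_smul, smul_eq_mul, hb,
      qciDMono_eq_qciMono, hφ]
    exact coord_qciMono_mul_qciX hqd hqc hb (fun _ => rfl) w _
  intro l x
  have hx : x ∈ nakayamaSubalgebra φ ν.toAlgHom := htop ▸ Algebra.mem_top
  exact hx l
end
end

section
/- Let k be a field, let c ≥ 2 and a ≥ 2 be integers, and let q ∈ k satisfy q^{a−1} = 1. Then the algebra A = k⟨X_1, …, X_c⟩/(X_i^a for all i; X_iX_j − qX_jX_i for all i < j) is a symmetric k-algebra. -/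
/-!
For `c, a ≥ 2` and `q ∈ k` with `q^{a-1} = 1`, the algebra
`k⟨X_1,…,X_c⟩/(X_i^a, X_iX_j - qX_jX_i (i < j))` is a symmetric algebra
(Example (ii) after Theorem `symmetrysymmetric`).
-/

noncomputable section

/-- `A` is a symmetric `k`-algebra: there is a trace form `φ` with `φ(ab) = φ(ba)` whose
associated bilinear form `(a,b) ↦ φ(ab)` is nondegenerate. -/
def IsSymmAlg (k A : Type) [Field k] [Ring A] [Algebra k A] : Prop :=
  ∃ φ : A →ₗ[k] k, (∀ x y : A, φ (x * y) = φ (y * x)) ∧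
    (∀ x : A, (∀ y : A, φ (x * y) = 0) → x = 0) ∧
    (∀ y : A, (∀ x : A, φ (x * y) = 0) → y = 0)

/-- The commutation matrix with `q` above the diagonal, `1` on it and `q⁻¹` below it. -/
def unifQ (k : Type) [Field k] (c : ℕ) (q : k) : Fin c → Fin c → k :=
  fun i j => if i < j then q else if i = j then 1 else q⁻¹

/-! The ordered monomials `X ^ b` with `b i < a` span `A`, and `A` acts on the vector space
with basis the monomials by a concrete model of its left regular representation. Reading off
the coefficient of the top monomial `X ^ (a - 1)` gives a linear form `φ` with
`φ (X ^ α * X ^ β) = 0` unless `α + β = a - 1`, in which case it is a nonzero product of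
entries of the commutation matrix; so the monomial basis is dual to itself up to reversing
exponents, and `φ` is nondegenerate. For the uniform matrix both `φ (X ^ α * X ^ β)` and
`φ (X ^ β * X ^ α)` are powers of `q⁻¹` whose exponents differ by a multiple of `a - 1`, so
`q ^ (a - 1) = 1` makes `φ` a trace form. -/

theorem isSymmAlg_of_span_eq_top {k A : Type} [Field k] [Ring A] [Algebra k A]
    {ι : Type*} [Fintype ι] {M : ι → A} (hM : Submodule.span k (Set.range M) = ⊤)
    (φ : A →ₗ[k] k) (τ : ι → ι) (hsymm : ∀ i j, φ (M i * M j) = φ (M j * M i))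
    (hdual : ∀ i j, φ (M i * M (τ j)) ≠ 0 ↔ i = j) :
    IsSymmAlg k A := by
  set B := (LinearMap.mul k A).compr₂ φ
  have hB : B = B.flip :=
    LinearMap.ext_on_range hM fun i => LinearMap.ext_on_range hM fun j => hsymm i j
  have htrace (x y : A) : φ (x * y) = φ (y * x) := LinearMap.congr_fun₂ hB x y
  have hleft (x : A) (hx : ∀ y, φ (x * y) = 0) : x = 0 := by
    obtain ⟨co, rfl⟩ :=
      (Submodule.mem_span_range_iff_exists_fun k (x := x)).mp (hM ▸ Submodule.mem_top)
    have hco (j : ι) : co j = 0 := by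
      have h := hx (M (τ j))
      rw [Finset.sum_mul, map_sum, Finset.sum_eq_single j
        (fun i _ hij => by rw [smul_mul_assoc, map_smul, not_ne_iff.mp ((hdual i j).not.mpr hij),
          smul_zero]) (by simp)] at h
      rw [smul_mul_assoc, map_smul, smul_eq_mul] at h
      exact (mul_eq_zero.mp h).resolve_right ((hdual j j).mpr rfl)
    simp [hco]
  exact ⟨φ, htrace, hleft, fun y hy => hleft y fun x => htrace y x ▸ hy x⟩

theorem mul_pow_eq_smul_of_mul_eq_smul {k A : Type*} [CommSemiring k] [Semiring A] [Algebra k A]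
    {x y : A} {s : k} (h : x * y = s • (y * x)) (n : ℕ) :
    x * y ^ n = s ^ n • (y ^ n * x) := by
  induction n with
  | zero => simp
  | succ n ih =>
    rw [pow_succ, ← mul_assoc, ih, smul_mul_assoc, mul_assoc, h, mul_smul_comm, smul_smul,
      ← mul_assoc, ← pow_succ]

open Finset in
/-- Each summand of the difference is `β i α j - α i β j = N (α j - α i)`. -/
theorem sum_sum_Iio_mul_modEq {ι : Type*} [Fintype ι] [LinearOrder ι] [LocallyFiniteOrderBot ι]
    {N : ℕ} {α β : ι → ℕ} (h : ∀ i, α i + β i = N) :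
    ∑ i, (∑ j ∈ Iio i, β j) * α i ≡ ∑ i, (∑ j ∈ Iio i, α j) * β i [MOD N] := by
  have hβ (i : ι) : (β i : ℤ) = N - α i := by have := h i; omega
  rw [Nat.modEq_iff_dvd]
  refine ⟨∑ i, ∑ j ∈ Iio i, ((α j : ℤ) - α i), ?_⟩
  push_cast
  simp only [hβ, sum_mul, mul_sum, ← sum_sub_distrib]
  exact sum_congr rfl fun i _ => sum_congr rfl fun j _ => by ring

namespace QCI

open Finset

variable {k : Type} [Field k] {c : ℕ} {q : Fin c → Fin c → k} {a : Fin c → ℕ}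

def X (i : Fin c) : QCI k c q a :=
  RingQuot.mkAlgHom k (qciRel k c q a) (FreeAlgebra.ι k i)

theorem X_pow_eq_zero (i : Fin c) : (X i : QCI k c q a) ^ a i = 0 := by
  simpa [X] using RingQuot.mkAlgHom_rel k (s := qciRel k c q a) (Or.inl ⟨i, rfl, rfl⟩)

theorem X_mul_X (i j : Fin c) : (X i : QCI k c q a) * X j = q i j • (X j * X i) := by
  simpa [X] using RingQuot.mkAlgHom_rel k (s := qciRel k c q a) (Or.inr ⟨i, j, rfl, rfl⟩)

def monomial (α : Fin c → ℕ) : QCI k c q a :=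
  ((List.finRange c).map fun j => X j ^ α j).prod

theorem monomial_eq_zero {α : Fin c → ℕ} {i : Fin c} (hi : a i ≤ α i) :
    (monomial α : QCI k c q a) = 0 := by
  refine List.prod_eq_zero (List.mem_map.mpr ⟨i, List.mem_finRange i, ?_⟩)
  rw [← Nat.add_sub_cancel' hi, pow_add, X_pow_eq_zero, zero_mul]

theorem exists_X_mul_listProd (i : Fin c) (α : Fin c → ℕ) :
    ∀ l : List (Fin c), l.Nodup → i ∈ l → ∃ s : k,
      (X i : QCI k c q a) * (l.map fun j => X j ^ α j).prod =
        s • (l.map fun j => X j ^ (α + Pi.single i 1 : Fin c → ℕ) j).prod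
  | [], _, hi => absurd hi List.not_mem_nil
  | j :: t, hnd, hi => by
    obtain ⟨hjt, hnd⟩ := List.nodup_cons.mp hnd
    simp only [List.map_cons, List.prod_cons]
    rcases eq_or_ne i j with rfl | hij
    · have htail : (t.map fun m => (X m : QCI k c q a) ^ (α + Pi.single i 1 : Fin c → ℕ) m) =
          t.map fun m => X m ^ α m :=
        List.map_congr_left fun m hm => by
          rw [Pi.add_apply, Pi.single_eq_of_ne (ne_of_mem_of_not_mem hm hjt), add_zero]
      refine ⟨1, ?_⟩
      rw [htail, one_smul, ← mul_assoc, Pi.add_apply, Pi.single_eq_same, pow_succ']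
    · obtain ⟨s, hs⟩ :=
        exists_X_mul_listProd i α t hnd ((List.mem_cons.mp hi).resolve_left hij)
      refine ⟨q i j ^ α j * s, ?_⟩
      rw [Pi.add_apply, Pi.single_eq_of_ne hij.symm, add_zero, ← mul_assoc,
        mul_pow_eq_smul_of_mul_eq_smul (X_mul_X i j), smul_mul_assoc, mul_assoc, hs,
        mul_smul_comm, smul_smul]

theorem exists_X_mul_monomial (i : Fin c) (α : Fin c → ℕ) :
    ∃ s : k, (X i : QCI k c q a) * monomial α = s • monomial (α + Pi.single i 1) :=
  exists_X_mul_listProd i α _ (List.nodup_finRange c) (List.mem_finRange i)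

def reducedMonomial (b : (i : Fin c) → Fin (a i)) : QCI k c q a :=
  monomial fun i => (b i : ℕ)

theorem monomial_mem_span_reducedMonomial (α : Fin c → ℕ) :
    (monomial α : QCI k c q a) ∈ Submodule.span k (Set.range reducedMonomial) := by
  by_cases h : ∀ i, α i < a i
  · exact Submodule.subset_span ⟨fun i => ⟨α i, h i⟩, rfl⟩
  · obtain ⟨i, hi⟩ := not_forall.mp h
    rw [monomial_eq_zero (not_lt.mp hi)]
    exact zero_mem _

theorem span_reducedMonomial_eq_top :
    Submodule.span k (Set.range reducedMonomial) = (⊤ : Submodule k (QCI k c q a)) := by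
  set S := Submodule.span k (Set.range (reducedMonomial (q := q) (a := a)))
  have hX (i : Fin c) {z : QCI k c q a} (hz : z ∈ S) : X i * z ∈ S := by
    induction hz using Submodule.span_induction with
    | mem w hw =>
      obtain ⟨b, rfl⟩ := hw
      obtain ⟨s, hs⟩ := exists_X_mul_monomial (q := q) (a := a) i fun m => (b m : ℕ)
      exact hs ▸ S.smul_mem s (monomial_mem_span_reducedMonomial _)
    | zero => rw [mul_zero]; exact S.zero_mem
    | add x y _ _ hx hy => simpa [mul_add] using S.add_mem hx hy
    | smul r x _ hx => simpa [mul_smul_comm] using S.smul_mem r hx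
  have hmul (y : QCI k c q a) {z : QCI k c q a} (hz : z ∈ S) : y * z ∈ S := by
    obtain ⟨w, rfl⟩ := RingQuot.mkAlgHom_surjective k (qciRel k c q a) y
    induction w using FreeAlgebra.induction generalizing z with
    | grade0 r => simpa [Algebra.algebraMap_eq_smul_one] using S.smul_mem r hz
    | grade1 i => exact hX i hz
    | mul u v hu hv => simpa [mul_assoc] using hu (hv hz)
    | add u v hu hv => simpa [add_mul] using S.add_mem (hu hz) (hv hz)
  have hone : (1 : QCI k c q a) ∈ S := by
    simpa [monomial] using monomial_mem_span_reducedMonomial (q := q) (a := a) 0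
  exact eq_top_iff.mpr fun y _ => by simpa using hmul y hone

variable (q) in
/-- The scalar in `X i * X ^ β = weight q i β • X ^ (β + Pi.single i 1)`, picked up by moving
`X i` past the factors `X j ^ β j` with `j < i`. -/
def weight (i : Fin c) (β : Fin c → ℕ) : k :=
  ∏ j ∈ Iio i, q i j ^ β j

theorem weight_congr {i : Fin c} {β γ : Fin c → ℕ} (h : ∀ j < i, β j = γ j) :
    weight q i β = weight q i γ :=
  prod_congr rfl fun j hj => by rw [h j (mem_Iio.mp hj)]

theorem weight_zero (i : Fin c) : weight q i 0 = 1 := by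
  simp [weight]

theorem weight_ne_zero {i : Fin c} (hq : ∀ j, q i j ≠ 0) (β : Fin c → ℕ) :
    weight q i β ≠ 0 :=
  prod_ne_zero_iff.mpr fun j _ => pow_ne_zero _ (hq j)

theorem weight_add_single_of_lt {i j : Fin c} (h : i < j) (β : Fin c → ℕ) :
    weight q j (β + Pi.single i 1) = weight q j β * q j i := by
  simp only [weight, Pi.add_apply, pow_add, prod_mul_distrib]
  congr 1
  rw [prod_eq_single_of_mem i (mem_Iio.mpr h) fun m _ hm => by simp [Pi.single_eq_of_ne hm]]
  simp

variable (q a) in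
/-- Left multiplication by `X i` on the span of the monomials `X ^ β`, which are modelled by
`Finsupp.single β 1`. -/
def regularX (i : Fin c) : Module.End k ((Fin c → ℕ) →₀ k) :=
  Finsupp.linearCombination k fun β =>
    Finsupp.single (β + Pi.single i 1) (if β i + 1 < a i then weight q i β else 0)

theorem regularX_single (i : Fin c) (β : Fin c → ℕ) (r : k) :
    regularX q a i (Finsupp.single β r) =
      Finsupp.single (β + Pi.single i 1) (r * if β i + 1 < a i then weight q i β else 0) := by
  simp [regularX]

theorem regularX_pow_single {i : Fin c} {β : Fin c → ℕ} (hβ : β i < a i) (m : ℕ) (r : k) :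
    (regularX q a i ^ m) (Finsupp.single β r) =
      Finsupp.single (β + Pi.single i m)
        (r * if β i + m < a i then weight q i β ^ m else 0) := by
  induction m with
  | zero => simp [hβ]
  | succ m ih =>
    have hw : weight q i (β + Pi.single i m) = weight q i β :=
      weight_congr fun j hj => by simp [hj.ne]
    rw [pow_succ', Module.End.mul_apply, ih, regularX_single, hw, add_assoc, ← Pi.single_add]
    congr 1
    simp only [Pi.add_apply, Pi.single_eq_same]
    split_ifs <;> first | ring1 | (exfalso; omega)

theorem regularX_pow_eq_zero {i : Fin c} (ha : 0 < a i) : regularX q a i ^ a i = 0 := by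
  refine Finsupp.lhom_ext fun β r => ?_
  rcases lt_or_ge (β i) (a i) with hβ | hβ
  · simp [regularX_pow_single hβ]
  · rw [← Nat.succ_pred_eq_of_pos ha, pow_succ, Module.End.mul_apply, regularX_single,
      if_neg (by omega)]
    simp

theorem regularX_mul_regularX_of_lt (hinv : ∀ i j, q i j * q j i = 1) {i j : Fin c}
    (h : i < j) :
    regularX q a i * regularX q a j = q i j • (regularX q a j * regularX q a i) := by
  refine Finsupp.lhom_ext fun β r => ?_
  have hwi : weight q i (β + Pi.single j 1) = weight q i β :=
    weight_congr fun m hm => by simp [(hm.trans h).ne]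
  simp only [Module.End.mul_apply, LinearMap.smul_apply, regularX_single, hwi,
    weight_add_single_of_lt h, Pi.add_apply, Pi.single_eq_of_ne h.ne, Pi.single_eq_of_ne h.ne',
    add_zero, Finsupp.smul_single, add_right_comm β (Pi.single i 1)]
  congr 1
  rw [smul_eq_mul]
  split_ifs <;> first | ring1 | linear_combination -(r * weight q i β * weight q j β) * hinv i j

theorem regularX_mul_regularX (hdiag : ∀ i, q i i = 1) (hinv : ∀ i j, q i j * q j i = 1)
    (i j : Fin c) :
    regularX q a i * regularX q a j = q i j • (regularX q a j * regularX q a i) := by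
  rcases lt_trichotomy i j with h | rfl | h
  · exact regularX_mul_regularX_of_lt hinv h
  · rw [hdiag, one_smul]
  · rw [regularX_mul_regularX_of_lt hinv h, smul_smul, hinv, one_smul]

variable (q a) in
def regular (hdiag : ∀ i, q i i = 1) (hinv : ∀ i j, q i j * q j i = 1) (ha : ∀ i, 0 < a i) :
    QCI k c q a →ₐ[k] Module.End k ((Fin c → ℕ) →₀ k) :=
  RingQuot.liftAlgHom k ⟨FreeAlgebra.lift k (regularX q a), by
    rintro _ _ (⟨i, rfl, rfl⟩ | ⟨i, j, rfl, rfl⟩)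
    · simp [regularX_pow_eq_zero (ha i)]
    · simp [regularX_mul_regularX hdiag hinv i j]⟩

section regular

variable (hdiag : ∀ i, q i i = 1) (hinv : ∀ i j, q i j * q j i = 1) (ha : ∀ i, 0 < a i)

theorem regular_X (i : Fin c) : regular q a hdiag hinv ha (X i) = regularX q a i := by
  simp [regular, X]

theorem listProd_regularX_pow_single {α β : Fin c → ℕ} (hβ : ∀ i, β i < a i) (r : k) :
    ∀ l : List (Fin c), l.Pairwise (· < ·) →
      (l.map fun j => regularX q a j ^ α j).prod (Finsupp.single β r) =
        Finsupp.single (β + (l.map fun j => Pi.single j (α j)).sum)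
          (r * (l.map fun j => if β j + α j < a j then weight q j β ^ α j else 0).prod)
  | [], _ => by simp
  | i :: t, hl => by
    obtain ⟨hit, ht⟩ := List.pairwise_cons.mp hl
    set γ : Fin c → ℕ := (t.map fun j => Pi.single j (α j)).sum
    have hγ (j : Fin c) (hj : j ≤ i) : γ j = 0 := by
      simp only [γ, Pi.list_sum_apply, List.map_map]
      exact List.sum_eq_zero <| List.forall_mem_map.mpr fun m hm =>
        Pi.single_eq_of_ne (hj.trans_lt (hit m hm)).ne _
    have hw : weight q i (β + γ) = weight q i β :=
      weight_congr fun j hj => by simp [hγ j hj.le]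
    have hβγ : (β + γ) i = β i := by simp [hγ i le_rfl]
    simp only [List.map_cons, List.prod_cons, List.sum_cons, Module.End.mul_apply]
    rw [listProd_regularX_pow_single hβ r t ht, regularX_pow_single (hβγ ▸ hβ i), hw, hβγ,
      add_assoc, add_comm γ]
    congr 1
    ring

theorem regular_monomial_single {α β : Fin c → ℕ} (hβ : ∀ i, β i < a i) (r : k) :
    regular q a hdiag hinv ha (monomial α) (Finsupp.single β r) =
      Finsupp.single (β + α)
        (r * ∏ i, if β i + α i < a i then weight q i β ^ α i else 0) := by
  have h := listProd_regularX_pow_single (q := q) (α := α) hβ r _ (List.pairwise_lt_finRange c)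
  rw [← Fin.sum_univ_def, univ_sum_single, ← Fin.prod_univ_def] at h
  simpa [monomial, map_list_prod, Function.comp_def, regular_X] using h

variable (q a) in
/-- The coefficient of the top monomial `X ^ (a - 1)`: `regular z` sends `1 = X ^ 0` to the
coordinates of `z` in the monomial basis. -/
def topCoeff : QCI k c q a →ₗ[k] k :=
  Finsupp.lapply (fun i => a i - 1) ∘ₗ LinearMap.applyₗ (Finsupp.single 0 1) ∘ₗ
    (regular q a hdiag hinv ha).toLinearMap

theorem topCoeff_monomial_mul_monomial {α β : Fin c → ℕ} (hβ : ∀ i, β i < a i) :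
    topCoeff q a hdiag hinv ha (monomial α * monomial β) =
      if α + β = (fun i => a i - 1) then ∏ i, weight q i β ^ α i else 0 := by
  have hone :
      regular q a hdiag hinv ha (monomial β) (Finsupp.single 0 1) = Finsupp.single β 1 := by
    simp [regular_monomial_single hdiag hinv ha (β := 0) (fun i => ha i), weight_zero, hβ]
  simp only [topCoeff, LinearMap.coe_comp, Function.comp_apply, AlgHom.toLinearMap_apply,
    map_mul, LinearMap.applyₗ_apply_apply, Module.End.mul_apply, hone, Finsupp.lapply_apply,
    regular_monomial_single hdiag hinv ha hβ, Finsupp.single_apply, add_comm β α, one_mul]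
  split_ifs with h
  · exact prod_congr rfl fun i _ => if_pos (by
      have h1 := congrFun h i
      have h2 := ha i
      simp only [Pi.add_apply] at h1
      omega)
  · rfl

theorem topCoeff_reducedMonomial_mul_rev_ne_zero_iff (b b' : (i : Fin c) → Fin (a i)) :
    topCoeff q a hdiag hinv ha (reducedMonomial b * reducedMonomial fun i => (b' i).rev) ≠ 0 ↔
      b = b' := by
  have hcompl : ((fun i => (b i : ℕ)) + fun i => ((b' i).rev : ℕ)) = (fun i => a i - 1) ↔
      b = b' := by
    simp only [funext_iff, Pi.add_apply, Fin.val_rev, Fin.ext_iff]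
    exact forall_congr' fun i => by omega
  rw [reducedMonomial, reducedMonomial,
    topCoeff_monomial_mul_monomial hdiag hinv ha fun i => (b' i).rev.isLt]
  split_ifs with h
  · have hw (i : Fin c) : weight q i (fun j => ((b' j).rev : ℕ)) ≠ 0 :=
      weight_ne_zero (fun j => left_ne_zero_of_mul_eq_one (hinv i j)) _
    exact iff_of_true (prod_ne_zero_iff.mpr fun i _ => pow_ne_zero _ (hw i)) (hcompl.mp h)
  · exact iff_of_false (fun h0 => h0 rfl) (mt hcompl.mpr h)

end regular

theorem unifQ_self (q : k) (i : Fin c) : unifQ k c q i i = 1 := by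
  simp [unifQ]

theorem unifQ_mul_unifQ {q : k} (hq : q ≠ 0) (i j : Fin c) :
    unifQ k c q i j * unifQ k c q j i = 1 := by
  rcases lt_trichotomy i j with h | rfl | h
  · simp [unifQ, h, lt_asymm h, h.ne', hq]
  · simp [unifQ]
  · simp [unifQ, h, lt_asymm h, h.ne', hq]

theorem weight_unifQ (q : k) (i : Fin c) (β : Fin c → ℕ) :
    weight (unifQ k c q) i β = q⁻¹ ^ ∑ j ∈ Iio i, β j := by
  rw [weight, ← prod_pow_eq_pow_sum]
  refine prod_congr rfl fun j hj => ?_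
  simp [unifQ, lt_asymm (mem_Iio.mp hj), (mem_Iio.mp hj).ne']

theorem topCoeff_unifQ_monomial_mul_comm {q : k} {a : ℕ} (hq : q ^ (a - 1) = 1)
    (hdiag : ∀ i, unifQ k c q i i = 1) (hinv : ∀ i j, unifQ k c q i j * unifQ k c q j i = 1)
    (ha : ∀ _ : Fin c, 0 < a) {α β : Fin c → ℕ} (hα : ∀ i, α i < a)
    (hβ : ∀ i, β i < a) :
    topCoeff (unifQ k c q) (fun _ => a) hdiag hinv ha (monomial α * monomial β) =
      topCoeff (unifQ k c q) (fun _ => a) hdiag hinv ha (monomial β * monomial α) := by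
  rw [topCoeff_monomial_mul_monomial hdiag hinv ha hβ,
    topCoeff_monomial_mul_monomial hdiag hinv ha hα, add_comm β α]
  split_ifs with h
  · simp only [weight_unifQ, ← pow_mul, prod_pow_eq_pow_sum]
    exact pow_eq_pow_of_modEq (sum_sum_Iio_mul_modEq fun i => congrFun h i)
      (by rw [inv_pow, hq, inv_one])
  · rfl

end QCI

theorem uniform_qci_is_symmetric_general
    (k : Type) [Field k] (c a : ℕ) (ha : 2 ≤ a)
    (q : k) (hq : q ^ (a - 1) = 1) :
    IsSymmAlg k (QCI k c (unifQ k c q) (fun _ => a)) := by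
  have hq0 : q ≠ 0 := by
    rintro rfl
    exact zero_ne_one ((zero_pow (by omega)).symm.trans hq)
  have hdiag := QCI.unifQ_self (c := c) q
  have hinv := QCI.unifQ_mul_unifQ (c := c) hq0
  have hpos : ∀ _ : Fin c, 0 < a := fun _ => by omega
  exact isSymmAlg_of_span_eq_top QCI.span_reducedMonomial_eq_top
    (QCI.topCoeff _ _ hdiag hinv hpos) (fun b i => (b i).rev)
    (fun b b' => QCI.topCoeff_unifQ_monomial_mul_comm hq hdiag hinv hpos
      (fun i => (b i).isLt) (fun i => (b' i).isLt))
    (QCI.topCoeff_reducedMonomial_mul_rev_ne_zero_iff hdiag hinv hpos)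

theorem uniform_qci_is_symmetric
    (k : Type) [Field k] (c a : ℕ) (hc : 2 ≤ c) (ha : 2 ≤ a)
    (q : k) (hq : q ^ (a - 1) = 1) :
    IsSymmAlg k (QCI k c (unifQ k c q) (fun _ => a)) :=
  uniform_qci_is_symmetric_general k c a ha q hq
end
end
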